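/- arXiv:2302.03886 — 2 statements merged into one kernel-verified Lean document; each statement's English description precedes it below -/
import Mathlib

section
/- Let X be an order-N real tensor of shape (I_1,…,I_N). For every core shape r = (R_1,…,R_N) with 1 ≤ R_n ≤ I_n, we have (1/N)·L̃(X,r) ≤ L(X,r) ≤ L̃(X,r), where L̃(X,r) = Σ_{n=1}^N Σ_{i=R_n+1}^{I_n} (σ_i^(n))² is the surrogate loss. -/
open scoped BigOperators
open Matrix

/-- Combine a fixed `n`-th coordinate with coordinates for the remaining modes. -/
def fullIdx {N : ℕ} {I : Fin N → ℕ} (n : Fin N) (i : Fin (I n))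
    (j : ∀ m : {m : Fin N // m ≠ n}, Fin (I m.1)) : ∀ k, Fin (I k) :=
  fun k => if h : k = n then Fin.cast (congrArg I h).symm i else j ⟨k, h⟩

/-- Mode-`n` unfolding of a tensor. -/
def modeUnfold {N : ℕ} {I : Fin N → ℕ} (X : (∀ k, Fin (I k)) → ℝ) (n : Fin N) :
    Matrix (Fin (I n)) (∀ m : {m : Fin N // m ≠ n}, Fin (I m.1)) ℝ :=
  fun i j => X (fullIdx n i j)

/-- Squared Frobenius norm of a tensor. -/
noncomputable def frobSq {N : ℕ} {I : Fin N → ℕ} (X : (∀ k, Fin (I k)) → ℝ) : ℝ :=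
  ∑ i : ∀ k, Fin (I k), (X i) ^ 2

/-- Tucker/multilinear reconstruction `G ×₁ A 1 ×₂ ⋯ ×_N A N`. -/
noncomputable def tucker {N : ℕ} {I R : Fin N → ℕ} (G : (∀ k, Fin (R k)) → ℝ)
    (A : ∀ n, Matrix (Fin (I n)) (Fin (R n)) ℝ) : (∀ k, Fin (I k)) → ℝ :=
  fun i => ∑ j : ∀ k, Fin (R k), G j * ∏ n, A n (i n) (j n)

/-- Optimal rank-`R` Tucker loss `L(X, R)`. -/
noncomputable def tuckerLoss {N : ℕ} (I : Fin N → ℕ) (X : (∀ k, Fin (I k)) → ℝ)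
    (R : Fin N → ℕ) : ℝ :=
  sInf {v : ℝ | ∃ (G : (∀ k, Fin (R k)) → ℝ)
    (A : ∀ n, Matrix (Fin (I n)) (Fin (R n)) ℝ),
    v = frobSq (fun i => X i - tucker G A i)}

/-- `σ` lists the singular values of `M` in nonincreasing order:
entries are nonnegative, nonincreasing, and their squares are the eigenvalues
of the positive semidefinite matrix `M * Mᵀ` (up to a permutation). -/
def IsSingularValues {k : ℕ} {c : Type*} [Fintype c]
    (M : Matrix (Fin k) c ℝ) (σ : Fin k → ℝ) : Prop :=
  (∀ i, 0 ≤ σ i) ∧ Antitone σ ∧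
    ∃ e : Equiv.Perm (Fin k), ∀ i, σ i ^ 2 =
      (Matrix.isHermitian_mul_conjTranspose_self M).eigenvalues (e i)

/-- Truncation of a tensor to the leading `R`-block. -/
def truncate {N : ℕ} {I : Fin N → ℕ} (S : (∀ k, Fin (I k)) → ℝ)
    (R : Fin N → ℕ) : (∀ k, Fin (I k)) → ℝ :=
  fun i => if ∀ n, (i n : ℕ) < R n then S i else 0

/-- Surrogate loss `L̃(X, R)`: sum of the squared tail singular values. -/
noncomputable def surrLoss {N : ℕ} {I : Fin N → ℕ} (σ : ∀ n, Fin (I n) → ℝ)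
    (R : Fin N → ℕ) : ℝ :=
  ∑ n, ∑ i ∈ Finset.univ.filter (fun i : Fin (I n) => R n ≤ (i : ℕ)), σ n i ^ 2

/-- Packing objective: sum of the squared leading singular values. -/
noncomputable def packObj {N : ℕ} {I : Fin N → ℕ} (σ : ∀ n, Fin (I n) → ℝ)
    (R : Fin N → ℕ) : ℝ :=
  ∑ n, ∑ i ∈ Finset.univ.filter (fun i : Fin (I n) => (i : ℕ) < R n), σ n i ^ 2

/-!
Write `M⁽ⁿ⁾` for the mode-`n` unfolding of `X` and `Tₙ = Σ_{i ≥ Rₙ} (σᵢ⁽ⁿ⁾)²` for its squared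
tail, so that `L̃ = Σₙ Tₙ`.

Lower bound: the mode-`n` unfolding of every Tucker reconstruction factors as `A⁽ⁿ⁾ W` with
`Rₙ` columns in `A⁽ⁿ⁾`. By the lower half of the Eckart–Young theorem, obtained from Ky Fan's
maximum principle `tr (P S) ≤ λ₁ + ⋯ + λ_R` for an orthogonal projection `P` of rank `R`, the
error is at least `Tₙ`. Hence `L ≥ maxₙ Tₙ ≥ L̃ / N`.

Upper bound: let `A⁽ⁿ⁾` consist of the `Rₙ` leading eigenvectors of `M⁽ⁿ⁾ M⁽ⁿ⁾ᵀ` and take the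
truncated HOSVD core. The reconstruction is then `X ×₁ P₁ ⋯ ×_N P_N` with the orthogonal
projections `Pₙ = A⁽ⁿ⁾ A⁽ⁿ⁾ᵀ`, and `‖X - PₙX‖² = Tₙ`. Removing one projection at a time with
Pythagoras, `‖X - Pₙ Z‖² = ‖X - Pₙ X‖² + ‖Pₙ (X - Z)‖² ≤ ‖X - Pₙ X‖² + ‖X - Z‖²`, bounds the
error by `Σₙ Tₙ`.
-/

lemma sum_mul_le_sum_val_lt_of_antitone {k R : ℕ} {f t : Fin k → ℝ} (hf : Antitone f)
    (hf0 : ∀ i, 0 ≤ f i) (ht0 : ∀ i, 0 ≤ t i) (ht1 : ∀ i, t i ≤ 1) (ht : ∑ i, t i ≤ R) :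
    ∑ i, f i * t i ≤ ∑ i : Fin k with i.val < R, f i := by
  rcases le_or_gt k R with hkR | hRk
  · rw [Finset.filter_true_of_mem fun i _ => i.2.trans_le hkR]
    exact Finset.sum_le_sum fun i _ => mul_le_of_le_one_right (hf0 i) (ht1 i)
  set c := f ⟨R, hRk⟩
  -- compare `t` with the indicator of `{i < R}` against the threshold `c = f R`
  have key : ∀ i : Fin k, (f i - c) * (t i - if i.val < R then 1 else 0) ≤ 0 := by
    intro i
    split_ifs with hi
    · exact mul_nonpos_of_nonneg_of_nonpos (sub_nonneg.2 (hf (Fin.le_def.2 hi.le)))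
        (by linarith [ht1 i])
    · exact mul_nonpos_of_nonpos_of_nonneg (sub_nonpos.2 (hf (Fin.le_def.2 (not_lt.1 hi))))
        (by linarith [ht0 i])
  have hcard : ∑ i : Fin k, (if i.val < R then (1 : ℝ) else 0) = R := by
    rw [Finset.sum_boole, Fin.card_filter_val_lt, min_eq_right hRk.le]
  have hexpand : ∑ i : Fin k, (f i - c) * (t i - if i.val < R then 1 else 0)
      = (∑ i, f i * t i - ∑ i : Fin k with i.val < R, f i) + c * (R - ∑ i, t i) := by
    simp only [mul_sub, sub_mul, Finset.sum_sub_distrib, ← Finset.mul_sum]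
    rw [hcard]
    simp only [mul_ite, mul_one, mul_zero, ← Finset.sum_filter]
    ring
  have hc : 0 ≤ c * (R - ∑ i, t i) := mul_nonneg (hf0 _) (by linarith)
  linarith [Finset.sum_nonpos fun i (_ : i ∈ Finset.univ) => key i]

lemma Fin.sum_castLE_eq_sum_val_lt {M : Type*} [AddCommMonoid M] {k R : ℕ} (h : R ≤ k)
    (f : Fin k → M) :
    ∑ r : Fin R, f (Fin.castLE h r) = ∑ i : Fin k with i.val < R, f i := by
  refine (Finset.sum_map Finset.univ (Fin.castLEEmb h) f).symm.trans ?_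
  congr 1
  ext i
  simp only [Finset.mem_map, Finset.mem_univ, true_and, Finset.mem_filter, Fin.castLEEmb_apply]
  exact ⟨fun ⟨r, hr⟩ => hr ▸ r.2, fun hi => ⟨⟨i, hi⟩, rfl⟩⟩

lemma Fin.sum_val_le_eq_sub {M : Type*} [AddCommGroup M] {k R : ℕ} (f : Fin k → M) :
    ∑ i : Fin k with R ≤ i.val, f i = ∑ i, f i - ∑ i : Fin k with i.val < R, f i := by
  rw [eq_sub_iff_add_eq, add_comm, ← Finset.sum_filter_add_sum_filter_not Finset.univ
    (fun i : Fin k => i.val < R)]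
  simp only [not_lt]

namespace Matrix

section FrobNormSq

variable {m n : Type*} [Fintype m] [Fintype n]

def frobNormSq (M : Matrix m n ℝ) : ℝ :=
  ∑ a, ∑ b, M a b ^ 2

lemma frobNormSq_nonneg (M : Matrix m n ℝ) : 0 ≤ frobNormSq M :=
  Finset.sum_nonneg fun _ _ => Finset.sum_nonneg fun _ _ => sq_nonneg _

lemma frobNormSq_eq_trace (M : Matrix m n ℝ) : frobNormSq M = (M * Mᵀ).trace := by
  simp [frobNormSq, trace, mul_apply, sq]

lemma frobNormSq_add_of_trace_eq_zero {A B : Matrix m n ℝ} (h : (A * Bᵀ).trace = 0) :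
    frobNormSq (A + B) = frobNormSq A + frobNormSq B := by
  have h' : (B * Aᵀ).trace = 0 := by rw [← trace_transpose, transpose_mul, transpose_transpose, h]
  simp only [frobNormSq_eq_trace, transpose_add, Matrix.add_mul, Matrix.mul_add, trace_add, h, h']
  ring

variable {P : Matrix m m ℝ}

/-- Pythagoras: `M - P M` is orthogonal to the range of `P`. -/
lemma frobNormSq_sub_mul_eq (hPs : P.IsSymm) (hPi : IsIdempotentElem P) (M Z : Matrix m n ℝ) :
    frobNormSq (M - P * Z) = frobNormSq (M - P * M) + frobNormSq (P * (M - Z)) := by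
  have hP0 : P * (M - P * M) = 0 := by rw [Matrix.mul_sub, ← Matrix.mul_assoc, hPi.eq, sub_self]
  have hcross : ((M - P * M) * (P * (M - Z))ᵀ).trace = 0 := by
    rw [transpose_mul, hPs.eq, ← Matrix.mul_assoc, trace_mul_comm, ← Matrix.mul_assoc, hP0,
      Matrix.zero_mul, trace_zero]
  rw [← frobNormSq_add_of_trace_eq_zero hcross, Matrix.mul_sub]
  abel_nf

lemma frobNormSq_mul_le (hPs : P.IsSymm) (hPi : IsIdempotentElem P) (M : Matrix m n ℝ) :
    frobNormSq (P * M) ≤ frobNormSq M := by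
  have := frobNormSq_sub_mul_eq hPs hPi M 0
  simp only [Matrix.mul_zero, sub_zero] at this
  linarith [frobNormSq_nonneg (M - P * M)]

lemma frobNormSq_sub_mul_self_le (hPs : P.IsSymm) (hPi : IsIdempotentElem P) (M Z : Matrix m n ℝ) :
    frobNormSq (M - P * M) ≤ frobNormSq (M - P * Z) := by
  rw [frobNormSq_sub_mul_eq hPs hPi M Z]
  linarith [frobNormSq_nonneg (P * (M - Z))]

lemma frobNormSq_sub_mul_le (hPs : P.IsSymm) (hPi : IsIdempotentElem P) (M Z : Matrix m n ℝ) :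
    frobNormSq (M - P * Z) ≤ frobNormSq (M - P * M) + frobNormSq (M - Z) := by
  rw [frobNormSq_sub_mul_eq hPs hPi]
  gcongr
  exact frobNormSq_mul_le hPs hPi _

lemma frobNormSq_sub_mul_self (hPs : P.IsSymm) (hPi : IsIdempotentElem P) (M : Matrix m n ℝ) :
    frobNormSq (M - P * M) = (M * Mᵀ).trace - (P * (M * Mᵀ)).trace := by
  have := frobNormSq_sub_mul_eq hPs hPi M 0
  simp only [Matrix.mul_zero, sub_zero] at this
  rw [frobNormSq_eq_trace (P * M), transpose_mul, hPs.eq, trace_mul_comm, Matrix.mul_assoc,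
    ← Matrix.mul_assoc P P M, hPi.eq, trace_mul_comm, Matrix.mul_assoc] at this
  rw [← frobNormSq_eq_trace]
  linarith

end FrobNormSq

section Projection

variable {m d : Type*} [Fintype d]

lemma isSymm_mul_transpose (A : Matrix m d ℝ) : (A * Aᵀ).IsSymm := by
  simp [IsSymm, transpose_mul]

variable [Fintype m] [DecidableEq d] {A : Matrix m d ℝ}

lemma isIdempotentElem_mul_transpose (hA : Aᵀ * A = 1) : IsIdempotentElem (A * Aᵀ) := by
  rw [IsIdempotentElem, Matrix.mul_assoc, ← Matrix.mul_assoc Aᵀ, hA, Matrix.one_mul]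

lemma trace_mul_transpose (hA : Aᵀ * A = 1) : (A * Aᵀ).trace = Fintype.card d := by
  rw [trace_mul_comm, hA, trace_one]

end Projection

lemma exists_proj_mul_eq {m r : Type*} [Fintype m] [Fintype r] (B : Matrix m r ℝ) :
    ∃ P : Matrix m m ℝ, P.IsSymm ∧ IsIdempotentElem P ∧ P.trace ≤ Fintype.card r ∧ P * B = B := by
  let col : r → EuclideanSpace ℝ m := fun j => WithLp.toLp 2 fun a => B a j
  let V := Submodule.span ℝ (Set.range col)
  let b := stdOrthonormalBasis ℝ V
  let A : Matrix m (Fin (Module.finrank ℝ V)) ℝ := of fun a l => (b l : EuclideanSpace ℝ m) a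
  have hinner : ∀ (l : Fin (Module.finrank ℝ V)) (x : EuclideanSpace ℝ m),
      inner ℝ (b l : EuclideanSpace ℝ m) x = ∑ a, A a l * x a := by
    intro l x
    simp [A, PiLp.inner_apply, mul_comm]
  have hA : Aᵀ * A = 1 := by
    ext l l'
    rw [mul_apply, one_apply, ← orthonormal_iff_ite.mp b.orthonormal l l', Submodule.coe_inner,
      hinner]
    rfl
  refine ⟨A * Aᵀ, isSymm_mul_transpose A, isIdempotentElem_mul_transpose hA, ?_, ?_⟩
  · rw [trace_mul_transpose hA, Fintype.card_fin]
    exact_mod_cast finrank_range_le_card (R := ℝ) col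
  · ext a j
    have hr := congrArg (fun x : V => (x : EuclideanSpace ℝ m) a)
      (b.sum_repr' ⟨col j, Submodule.subset_span (Set.mem_range_self j)⟩)
    simp only [Submodule.coe_inner, hinner] at hr
    simp only [Submodule.coe_sum, Submodule.coe_smul, WithLp.ofLp_sum, Finset.sum_apply,
      PiLp.smul_apply, smul_eq_mul] at hr
    refine Eq.trans ?_ hr
    simp only [A, col, mul_apply, transpose_apply, of_apply, Finset.sum_mul]
    rw [Finset.sum_comm]
    exact Finset.sum_congr rfl fun l _ => Finset.sum_congr rfl fun a' _ => by ring

section Spectral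

variable {n : Type*} [Fintype n]

lemma diag_mem_Icc_of_isSymm_of_isIdempotentElem {Q : Matrix n n ℝ} (hQs : Q.IsSymm)
    (hQi : IsIdempotentElem Q) (q : n) : 0 ≤ Q q q ∧ Q q q ≤ 1 := by
  have hdiag : Q q q = ∑ r, Q q r ^ 2 := by
    conv_lhs => rw [← hQi.eq]
    simp only [mul_apply, sq]
    exact Finset.sum_congr rfl fun r _ => by rw [← hQs.apply q r]
  have hnonneg : 0 ≤ Q q q := hdiag ▸ Finset.sum_nonneg fun r _ => sq_nonneg _
  have hsq : Q q q ^ 2 ≤ Q q q :=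
    hdiag ▸ Finset.single_le_sum (f := fun r => Q q r ^ 2) (fun r _ => sq_nonneg _)
      (Finset.mem_univ q)
  exact ⟨hnonneg, by nlinarith⟩

variable [DecidableEq n] {S : Matrix n n ℝ} (hS : S.IsHermitian)

lemma IsHermitian.transpose_eigenvectorUnitary_mul :
    (hS.eigenvectorUnitary : Matrix n n ℝ)ᵀ * hS.eigenvectorUnitary = 1 := by
  rw [← conjTranspose_eq_transpose_of_trivial, ← star_eq_conjTranspose,
    Unitary.star_mul_self_of_mem hS.eigenvectorUnitary.2]

lemma IsHermitian.eigenvectorUnitary_mul_transpose :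
    (hS.eigenvectorUnitary : Matrix n n ℝ) * (hS.eigenvectorUnitary : Matrix n n ℝ)ᵀ = 1 := by
  rw [← conjTranspose_eq_transpose_of_trivial, ← star_eq_conjTranspose,
    Unitary.mul_star_self_of_mem hS.eigenvectorUnitary.2]

lemma IsHermitian.trace_mul_eq_sum_eigenvalues_mul (P : Matrix n n ℝ) :
    (P * S).trace = ∑ q, hS.eigenvalues q *
      ((hS.eigenvectorUnitary : Matrix n n ℝ)ᵀ * P * hS.eigenvectorUnitary) q q := by
  set U : Matrix n n ℝ := (hS.eigenvectorUnitary : Matrix n n ℝ)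
  have hD : Uᵀ * S * U = diagonal hS.eigenvalues := by
    have := hS.conjStarAlgAut_star_eigenvectorUnitary
    rwa [Unitary.conjStarAlgAut_star_apply, star_eq_conjTranspose,
      conjTranspose_eq_transpose_of_trivial, RCLike.ofReal_real_eq_id, Function.id_comp] at this
  calc (P * S).trace = (U * Uᵀ * (P * S)).trace := by
        rw [hS.eigenvectorUnitary_mul_transpose, Matrix.one_mul]
    _ = ((Uᵀ * P * U) * (Uᵀ * S * U)).trace := by
        have : (Uᵀ * P * U) * (Uᵀ * S * U) = Uᵀ * (P * S) * U := by
          simp only [Matrix.mul_assoc]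
          rw [← Matrix.mul_assoc U, hS.eigenvectorUnitary_mul_transpose, Matrix.one_mul]
        rw [this, trace_mul_cycle Uᵀ]
    _ = _ := by
        rw [hD]
        simp [trace, mul_diagonal, mul_comm]

end Spectral

theorem IsHermitian.trace_mul_le_sum_val_lt {k R : ℕ} {S : Matrix (Fin k) (Fin k) ℝ}
    (hS : S.IsHermitian) {f : Fin k → ℝ} (hf : Antitone f) (hf0 : ∀ i, 0 ≤ f i)
    {e : Equiv.Perm (Fin k)} (he : ∀ i, f i = hS.eigenvalues (e i))
    {P : Matrix (Fin k) (Fin k) ℝ} (hPs : P.IsSymm) (hPi : IsIdempotentElem P)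
    (hPR : P.trace ≤ R) :
    (P * S).trace ≤ ∑ i : Fin k with i.val < R, f i := by
  set U : Matrix (Fin k) (Fin k) ℝ := (hS.eigenvectorUnitary : Matrix (Fin k) (Fin k) ℝ)
  set Q := Uᵀ * P * U
  have hQs : Q.IsSymm := by
    simp only [Q, IsSymm, transpose_mul, transpose_transpose, hPs.eq, Matrix.mul_assoc]
  have hQi : IsIdempotentElem Q := by
    change Q * Q = Q
    simp only [Q, Matrix.mul_assoc]
    rw [← Matrix.mul_assoc U, hS.eigenvectorUnitary_mul_transpose, Matrix.one_mul,
      ← Matrix.mul_assoc P P, hPi.eq]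
  have hQtr : Q.trace = P.trace := by
    rw [trace_mul_cycle, hS.eigenvectorUnitary_mul_transpose, Matrix.one_mul]
  rw [hS.trace_mul_eq_sum_eigenvalues_mul, ← Equiv.sum_comp e]
  simp only [← he]
  refine sum_mul_le_sum_val_lt_of_antitone hf hf0
    (fun i => (diag_mem_Icc_of_isSymm_of_isIdempotentElem hQs hQi _).1)
    (fun i => (diag_mem_Icc_of_isSymm_of_isIdempotentElem hQs hQi _).2) ?_
  calc ∑ i, Q (e i) (e i) = Q.trace := Equiv.sum_comp e fun q => Q q q
    _ ≤ R := hQtr ▸ hPR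

end Matrix

namespace IsSingularValues

variable {k : ℕ} {c : Type*} [Fintype c] {M : Matrix (Fin k) c ℝ} {σ : Fin k → ℝ}

lemma antitone_sq (hσ : IsSingularValues M σ) : Antitone fun i => σ i ^ 2 :=
  fun _ j hij => pow_le_pow_left₀ (hσ.1 j) (hσ.2.1 hij) 2

lemma trace_mul_transpose (hσ : IsSingularValues M σ) : (M * Mᵀ).trace = ∑ i, σ i ^ 2 := by
  obtain ⟨-, -, e, he⟩ := hσ
  rw [← conjTranspose_eq_transpose_of_trivial,
    (isHermitian_mul_conjTranspose_self M).trace_eq_sum_eigenvalues, ← Equiv.sum_comp e]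
  simp [he]

theorem sum_sq_le_frobNormSq_sub_mul (hσ : IsSingularValues M σ) {R : ℕ}
    (B : Matrix (Fin k) (Fin R) ℝ) (W : Matrix (Fin R) c ℝ) :
    ∑ i : Fin k with R ≤ i.val, σ i ^ 2 ≤ frobNormSq (M - B * W) := by
  obtain ⟨P, hPs, hPi, hPR, hPB⟩ := exists_proj_mul_eq B
  rw [Fintype.card_fin] at hPR
  obtain ⟨e, he⟩ := hσ.2.2
  have hkyfan : (P * (M * Mᵀ)).trace ≤ ∑ i : Fin k with i.val < R, σ i ^ 2 := by
    rw [← conjTranspose_eq_transpose_of_trivial M]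
    exact (isHermitian_mul_conjTranspose_self M).trace_mul_le_sum_val_lt hσ.antitone_sq
      (fun i => sq_nonneg _) he hPs hPi hPR
  calc ∑ i : Fin k with R ≤ i.val, σ i ^ 2
      ≤ (M * Mᵀ).trace - (P * (M * Mᵀ)).trace := by
        rw [Fin.sum_val_le_eq_sub, hσ.trace_mul_transpose]
        linarith
    _ = frobNormSq (M - P * M) := (frobNormSq_sub_mul_self hPs hPi M).symm
    _ ≤ frobNormSq (M - P * (B * W)) := frobNormSq_sub_mul_self_le hPs hPi M _
    _ = frobNormSq (M - B * W) := by rw [← Matrix.mul_assoc, hPB]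

theorem exists_frobNormSq_sub_mul_eq (hσ : IsSingularValues M σ) {R : ℕ} (hR : R ≤ k) :
    ∃ A : Matrix (Fin k) (Fin R) ℝ, Aᵀ * A = 1 ∧
      frobNormSq (M - A * Aᵀ * M) = ∑ i : Fin k with R ≤ i.val, σ i ^ 2 := by
  obtain ⟨e, he⟩ := hσ.2.2
  set hS := isHermitian_mul_conjTranspose_self M
  set U : Matrix (Fin k) (Fin k) ℝ := (hS.eigenvectorUnitary : Matrix (Fin k) (Fin k) ℝ)
  set g : Fin R → Fin k := fun r => e (Fin.castLE hR r)
  have hg : Function.Injective g := e.injective.comp (Fin.castLE_injective hR)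
  -- the columns of `U * E` are the eigenvectors of the `R` largest eigenvalues
  set E : Matrix (Fin k) (Fin R) ℝ := of fun q r => if q = g r then 1 else 0
  have hE : Eᵀ * E = 1 := by
    ext r r'
    simp [E, mul_apply, one_apply, hg.eq_iff, eq_comm (a := r')]
  have hA : (U * E)ᵀ * (U * E) = 1 := by
    rw [transpose_mul, Matrix.mul_assoc, ← Matrix.mul_assoc Uᵀ,
      hS.transpose_eigenvectorUnitary_mul, Matrix.one_mul, hE]
  have hconj : Uᵀ * (U * E * (U * E)ᵀ) * U = E * Eᵀ := by
    simp only [transpose_mul, Matrix.mul_assoc]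
    rw [hS.transpose_eigenvectorUnitary_mul, Matrix.mul_one, ← Matrix.mul_assoc Uᵀ U,
      hS.transpose_eigenvectorUnitary_mul, Matrix.one_mul]
  refine ⟨U * E, hA, ?_⟩
  have hhead : (U * E * (U * E)ᵀ * (M * Mᵀ)).trace = ∑ i : Fin k with i.val < R, σ i ^ 2 := by
    rw [← conjTranspose_eq_transpose_of_trivial M, hS.trace_mul_eq_sum_eigenvalues_mul, hconj,
      ← Fin.sum_castLE_eq_sum_val_lt hR]
    simp only [E, he, mul_apply, transpose_apply, of_apply, mul_ite, mul_one, mul_zero,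
      Finset.mul_sum]
    rw [Finset.sum_comm]
    simp [g]
  rw [frobNormSq_sub_mul_self (isSymm_mul_transpose _) (isIdempotentElem_mul_transpose hA),
    hσ.trace_mul_transpose, hhead, Fin.sum_val_le_eq_sub]

end IsSingularValues

section Tensor

variable {N : ℕ} {I : Fin N → ℕ}

@[simp] lemma fullIdx_self (n : Fin N) (a : Fin (I n))
    (j : ∀ m : {m : Fin N // m ≠ n}, Fin (I m.1)) : fullIdx n a j n = a := by
  simp [fullIdx]

@[simp] lemma fullIdx_of_ne (n : Fin N) (a : Fin (I n))
    (j : ∀ m : {m : Fin N // m ≠ n}, Fin (I m.1)) (m : {m : Fin N // m ≠ n}) :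
    fullIdx n a j m = j m := by
  simp [fullIdx, m.2]

lemma piSplitAt_symm_eq_fullIdx (n : Fin N) (a : Fin (I n))
    (j : ∀ m : {m : Fin N // m ≠ n}, Fin (I m.1)) :
    (Equiv.piSplitAt n fun k => Fin (I k)).symm (a, j) = fullIdx n a j := by
  funext k
  by_cases h : k = n
  · subst h; simp [Equiv.piSplitAt]
  · exact (fullIdx_of_ne n a j ⟨k, h⟩).symm ▸ dif_neg h

lemma sum_eq_sum_fullIdx (n : Fin N) (f : (∀ k, Fin (I k)) → ℝ) :
    ∑ i, f i = ∑ a : Fin (I n), ∑ j, f (fullIdx n a j) := by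
  rw [← (Equiv.piSplitAt n fun k => Fin (I k)).symm.sum_comp, Fintype.sum_prod_type]
  simp only [piSplitAt_symm_eq_fullIdx]

lemma frobSq_nonneg (X : (∀ k, Fin (I k)) → ℝ) : 0 ≤ frobSq X :=
  Finset.sum_nonneg fun _ _ => sq_nonneg _

lemma frobSq_eq_frobNormSq_modeUnfold (X : (∀ k, Fin (I k)) → ℝ) (n : Fin N) :
    frobSq X = (modeUnfold X n).frobNormSq := by
  rw [frobSq, sum_eq_sum_fullIdx n]
  rfl

lemma modeUnfold_sub (X Y : (∀ k, Fin (I k)) → ℝ) (n : Fin N) :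
    modeUnfold (X - Y) n = modeUnfold X n - modeUnfold Y n :=
  rfl

/-- The `n`-mode product `X ×ₙ P` with a square matrix `P`. -/
noncomputable def modeProd (n : Fin N) (P : Matrix (Fin (I n)) (Fin (I n)) ℝ)
    (X : (∀ k, Fin (I k)) → ℝ) : (∀ k, Fin (I k)) → ℝ :=
  fun i => ∑ a, P (i n) a * X (fullIdx n a fun m => i m)

lemma modeUnfold_modeProd (n : Fin N) (P : Matrix (Fin (I n)) (Fin (I n)) ℝ)
    (X : (∀ k, Fin (I k)) → ℝ) : modeUnfold (modeProd n P X) n = P * modeUnfold X n := by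
  ext a j
  simp only [modeUnfold, modeProd, Matrix.mul_apply, fullIdx_self, fullIdx_of_ne]

lemma frobSq_sub_modeProd_le {n : Fin N} {P : Matrix (Fin (I n)) (Fin (I n)) ℝ} (hPs : P.IsSymm)
    (hPi : IsIdempotentElem P) (X Z : (∀ k, Fin (I k)) → ℝ) :
    frobSq (X - modeProd n P Z) ≤ frobSq (X - modeProd n P X) + frobSq (X - Z) := by
  simp only [frobSq_eq_frobNormSq_modeUnfold _ n, modeUnfold_sub, modeUnfold_modeProd]
  exact Matrix.frobNormSq_sub_mul_le hPs hPi _ _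

/-- The multilinear product `X ×₁ Q₁ ×₂ ⋯ ×_N Q_N` with square matrices. -/
noncomputable def multiModeProd (Q : ∀ n, Matrix (Fin (I n)) (Fin (I n)) ℝ)
    (X : (∀ k, Fin (I k)) → ℝ) : (∀ k, Fin (I k)) → ℝ :=
  fun i => ∑ g, (∏ n, Q n (i n) (g n)) * X g

lemma multiModeProd_one (X : (∀ k, Fin (I k)) → ℝ) : multiModeProd (fun _ => 1) X = X := by
  funext i
  simp [multiModeProd, Matrix.one_apply, Finset.prod_boole, ← funext_iff]

lemma modeProd_multiModeProd (n : Fin N) (P : Matrix (Fin (I n)) (Fin (I n)) ℝ)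
    (Q : ∀ n, Matrix (Fin (I n)) (Fin (I n)) ℝ) (X : (∀ k, Fin (I k)) → ℝ) :
    modeProd n P (multiModeProd Q X) = multiModeProd (Function.update Q n (P * Q n)) X := by
  funext i
  simp only [modeProd, multiModeProd, Finset.mul_sum]
  rw [Finset.sum_comm]
  refine Finset.sum_congr rfl fun g _ => ?_
  simp only [Fintype.prod_eq_mul_prod_subtype_ne _ n, fullIdx_self, fullIdx_of_ne,
    Function.update_self, Matrix.mul_apply, Finset.sum_mul]
  refine Finset.sum_congr rfl fun a _ => ?_
  have hrest : ∀ m : {m : Fin N // m ≠ n}, Function.update Q n (P * Q n) m (i m) (g m)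
      = Q m (i m) (g m) := fun m => by rw [Function.update_of_ne m.2]
  simp only [hrest]
  ring

lemma frobSq_sub_multiModeProd_le (P : ∀ n, Matrix (Fin (I n)) (Fin (I n)) ℝ)
    (hPs : ∀ n, (P n).IsSymm) (hPi : ∀ n, IsIdempotentElem (P n)) (X : (∀ k, Fin (I k)) → ℝ)
    (s : Finset (Fin N)) :
    frobSq (X - multiModeProd (fun n => if n ∈ s then P n else 1) X)
      ≤ ∑ n ∈ s, frobSq (X - modeProd n (P n) X) := by
  induction s using Finset.induction_on with
  | empty => simp [multiModeProd_one, frobSq]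
  | insert n s hn ih =>
    have hstep : multiModeProd (fun m => if m ∈ insert n s then P m else 1) X
        = modeProd n (P n) (multiModeProd (fun m => if m ∈ s then P m else 1) X) := by
      rw [modeProd_multiModeProd]
      congr 1
      funext m
      by_cases h : m = n
      · subst h; simp [hn]
      · simp [h]
    rw [hstep, Finset.sum_insert hn]
    exact (frobSq_sub_modeProd_le (hPs n) (hPi n) X _).trans (by gcongr)

end Tensor

section Tucker

variable {N : ℕ} {I R : Fin N → ℕ}

lemma modeUnfold_tucker (G : (∀ k, Fin (R k)) → ℝ) (A : ∀ n, Matrix (Fin (I n)) (Fin (R n)) ℝ)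
    (n : Fin N) : ∃ W : Matrix (Fin (R n)) (∀ m : {m : Fin N // m ≠ n}, Fin (I m.1)) ℝ,
      modeUnfold (tucker G A) n = A n * W := by
  refine ⟨Matrix.of fun r (j : ∀ m : {m : Fin N // m ≠ n}, Fin (I m.1)) =>
    ∑ l : ∀ m : {m : Fin N // m ≠ n}, Fin (R m.1),
      G (fullIdx n r l) * ∏ m : {m : Fin N // m ≠ n}, A m (j m) (l m), ?_⟩
  funext a j
  simp only [modeUnfold, tucker, Matrix.mul_apply, Matrix.of_apply, Finset.mul_sum]
  rw [sum_eq_sum_fullIdx n]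
  refine Finset.sum_congr rfl fun r _ => Finset.sum_congr rfl fun l _ => ?_
  rw [Fintype.prod_eq_mul_prod_subtype_ne _ n]
  simp only [fullIdx_self, fullIdx_of_ne]
  ring

lemma tucker_eq_multiModeProd (A : ∀ n, Matrix (Fin (I n)) (Fin (R n)) ℝ)
    (X : (∀ k, Fin (I k)) → ℝ) :
    tucker (fun j => ∑ g, X g * ∏ n, A n (g n) (j n)) A
      = multiModeProd (fun n => A n * (A n)ᵀ) X := by
  funext i
  simp only [tucker, multiModeProd, Finset.sum_mul, Matrix.mul_apply, Matrix.transpose_apply]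
  rw [Finset.sum_comm]
  refine Finset.sum_congr rfl fun g _ => ?_
  rw [Finset.prod_univ_sum, Finset.sum_mul]
  refine Finset.sum_congr rfl fun j _ => ?_
  rw [Finset.prod_mul_distrib]
  ring

variable {X : (∀ k, Fin (I k)) → ℝ}

lemma le_tuckerLoss {c : ℝ} (h : ∀ G A, c ≤ frobSq (X - tucker (R := R) G A)) :
    c ≤ tuckerLoss I X R :=
  le_csInf ⟨_, 0, 0, rfl⟩ fun _ ⟨G, A, hv⟩ => hv ▸ h G A

lemma tuckerLoss_le (G : (∀ k, Fin (R k)) → ℝ) (A : ∀ n, Matrix (Fin (I n)) (Fin (R n)) ℝ) :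
    tuckerLoss I X R ≤ frobSq (X - tucker G A) :=
  csInf_le ⟨0, fun _ ⟨_, _, hv⟩ => hv ▸ frobSq_nonneg _⟩ ⟨G, A, rfl⟩

lemma tuckerLoss_nonneg : 0 ≤ tuckerLoss I X R :=
  le_tuckerLoss fun _ _ => frobSq_nonneg _

theorem sum_sq_le_tuckerLoss {n : Fin N} {σ : Fin (I n) → ℝ}
    (hσ : IsSingularValues (modeUnfold X n) σ) :
    ∑ i : Fin (I n) with R n ≤ i.val, σ i ^ 2 ≤ tuckerLoss I X R :=
  le_tuckerLoss fun G A => by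
    obtain ⟨W, hW⟩ := modeUnfold_tucker G A n
    rw [frobSq_eq_frobNormSq_modeUnfold _ n, modeUnfold_sub, hW]
    exact hσ.sum_sq_le_frobNormSq_sub_mul _ _

theorem tuckerLoss_le_surrLoss {σ : ∀ n, Fin (I n) → ℝ}
    (hσ : ∀ n, IsSingularValues (modeUnfold X n) (σ n)) (hR : ∀ n, R n ≤ I n) :
    tuckerLoss I X R ≤ surrLoss σ R := by
  choose A hA hAM using fun n => (hσ n).exists_frobNormSq_sub_mul_eq (hR n)
  calc tuckerLoss I X R
      ≤ frobSq (X - tucker (fun j => ∑ g, X g * ∏ n, A n (g n) (j n)) A) := tuckerLoss_le _ _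
    _ = frobSq (X - multiModeProd (fun n => if n ∈ Finset.univ then A n * (A n)ᵀ else 1) X) := by
      simp [tucker_eq_multiModeProd]
    _ ≤ ∑ n, frobSq (X - modeProd n (A n * (A n)ᵀ) X) :=
      frobSq_sub_multiModeProd_le _ (fun n => Matrix.isSymm_mul_transpose _)
        (fun n => Matrix.isIdempotentElem_mul_transpose (hA n)) X Finset.univ
    _ = surrLoss σ R := Finset.sum_congr rfl fun n _ => by
      rw [frobSq_eq_frobNormSq_modeUnfold _ n, modeUnfold_sub, modeUnfold_modeProd, hAM n]

end Tucker

theorem sandwich_loss_general {N : ℕ} {I : Fin N → ℕ}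
    (X : (∀ k, Fin (I k)) → ℝ)
    (σ : ∀ n, Fin (I n) → ℝ) (hσ : ∀ n, IsSingularValues (modeUnfold X n) (σ n))
    (R : Fin N → ℕ) (hR : ∀ n, 1 ≤ R n ∧ R n ≤ I n) :
    (1 / (N : ℝ)) * surrLoss σ R ≤ tuckerLoss I X R ∧
      tuckerLoss I X R ≤ surrLoss σ R := by
  refine ⟨?_, tuckerLoss_le_surrLoss hσ fun n => (hR n).2⟩
  have hsum : surrLoss σ R ≤ tuckerLoss I X R * N :=
    calc surrLoss σ R ≤ ∑ _n : Fin N, tuckerLoss I X R :=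
          Finset.sum_le_sum fun n _ => sum_sq_le_tuckerLoss (hσ n)
      _ = tuckerLoss I X R * N := by simp [mul_comm]
  rw [one_div_mul_eq_div]
  exact div_le_of_le_mul₀ N.cast_nonneg tuckerLoss_nonneg hsum

/-- **Sandwich bound**: `(1/N)·L̃(X,R) ≤ L(X,R) ≤ L̃(X,R)` where `L̃` is the
surrogate loss `Σ_n Σ_{i > R_n} (σ_i⁽ⁿ⁾)²`. -/
theorem sandwich_loss {N : ℕ} {I : Fin N → ℕ} (hI : ∀ n, 1 ≤ I n)
    (X : (∀ k, Fin (I k)) → ℝ)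
    (σ : ∀ n, Fin (I n) → ℝ) (hσ : ∀ n, IsSingularValues (modeUnfold X n) (σ n))
    (R : Fin N → ℕ) (hR : ∀ n, 1 ≤ R n ∧ R n ≤ I n) :
    (1 / (N : ℝ)) * surrLoss σ R ≤ tuckerLoss I X R ∧
      tuckerLoss I X R ≤ surrLoss σ R :=
  sandwich_loss_general X σ hσ R hR
end

section
/- Let X ≠ 0 be an order-N real tensor of shape (I_1,…,I_N), let c ≥ 1 + Σ_{n=1}^N I_n, let F = {r ∈ [I_1]×⋯×[I_N] : ∏_{n=1}^N R_n + Σ_{n=1}^N I_n R_n ≤ c}, and let r̃* ∈ F minimize the surrogate loss L̃(X,·) over F. Let 0 ≤ ε' ≤ 1. If r ∈ F satisfies Σ_{n=1}^N Σ_{i=1}^{R_n} (σ_i^(n))² ≥ (1 − ε') · Σ_{n=1}^N Σ_{i=1}^{R̃*_n} (σ_i^(n))², then L̃(X,r) ≤ L̃(X,r̃*) + ε' · (N‖X‖_F² − L̃(X,r̃*)) ≤ L̃(X,r̃*) + ε' · N · ‖X‖_F². -/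
open scoped BigOperators
open Matrix

/- The surrogate loss and the packing objective split the squared singular values of every mode
into tail and head, and the squared singular values of each mode sum to
`tr (X_(n) X_(n)ᵀ) = ‖X‖_F²`; so `L̃(X, R) = N‖X‖_F² − packObj R`
for every core shape `R`, and the bound is the approximation hypothesis rewritten through this
identity. -/

theorem Matrix.sum_eigenvalues_mul_conjTranspose_self {m c : Type*} [Fintype m] [DecidableEq m]
    [Fintype c] (M : Matrix m c ℝ) :
    ∑ i, (isHermitian_mul_conjTranspose_self M).eigenvalues i = ∑ i, ∑ j, M i j ^ 2 := by
  have htrace := (isHermitian_mul_conjTranspose_self M).trace_eq_sum_eigenvalues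
  simp only [RCLike.ofReal_real_eq_id, id] at htrace
  rw [← htrace]
  simp [Matrix.trace, Matrix.mul_apply, sq]

theorem IsSingularValues.sum_sq {k : ℕ} {c : Type*} [Fintype c] {M : Matrix (Fin k) c ℝ}
    {σ : Fin k → ℝ} (hσ : IsSingularValues M σ) : ∑ i, σ i ^ 2 = ∑ i, ∑ j, M i j ^ 2 := by
  obtain ⟨-, -, e, he⟩ := hσ
  simp only [he]
  rw [Equiv.sum_comp e, Matrix.sum_eigenvalues_mul_conjTranspose_self]

theorem fullIdx_eq_piSplitAt_symm {N : ℕ} {I : Fin N → ℕ} (n : Fin N) (i : Fin (I n))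
    (j : ∀ m : {m : Fin N // m ≠ n}, Fin (I m.1)) :
    fullIdx n i j = (Equiv.piSplitAt n fun k => Fin (I k)).symm (i, j) := by
  funext k
  by_cases h : k = n
  · subst h
    simp [fullIdx]
  · simp [fullIdx, h]

theorem sum_sq_modeUnfold {N : ℕ} {I : Fin N → ℕ} (X : (∀ k, Fin (I k)) → ℝ) (n : Fin N) :
    ∑ i, ∑ j, modeUnfold X n i j ^ 2 = frobSq X := by
  rw [frobSq, ← Fintype.sum_prod_type']
  exact Fintype.sum_equiv (Equiv.piSplitAt n fun k => Fin (I k)).symm _ _ fun p => by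
    simp [modeUnfold, fullIdx_eq_piSplitAt_symm]

theorem surrLoss_add_packObj {N : ℕ} {I : Fin N → ℕ} (σ : ∀ n, Fin (I n) → ℝ)
    (R : Fin N → ℕ) : surrLoss σ R + packObj σ R = ∑ n, ∑ i, σ n i ^ 2 := by
  rw [surrLoss, packObj, ← Finset.sum_add_distrib]
  refine Fintype.sum_congr _ _ fun n => ?_
  simp only [← not_lt]
  exact Finset.sum_filter_not_add_sum_filter _ _ _

theorem surrLoss_nonneg {N : ℕ} {I : Fin N → ℕ} (σ : ∀ n, Fin (I n) → ℝ) (R : Fin N → ℕ) :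
    0 ≤ surrLoss σ R :=
  Finset.sum_nonneg fun _ _ => Finset.sum_nonneg fun _ _ => sq_nonneg _

theorem surrLoss_add_packObj_of_isSingularValues {N : ℕ} {I : Fin N → ℕ}
    {X : (∀ k, Fin (I k)) → ℝ} {σ : ∀ n, Fin (I n) → ℝ}
    (hσ : ∀ n, IsSingularValues (modeUnfold X n) (σ n)) (R : Fin N → ℕ) :
    surrLoss σ R + packObj σ R = N * frobSq X := by
  simp [surrLoss_add_packObj, (hσ _).sum_sq, sum_sq_modeUnfold]

theorem surrogate_of_approximate_packing_general {N : ℕ} {I : Fin N → ℕ}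
    (X : (∀ k, Fin (I k)) → ℝ)
    (σ : ∀ n, Fin (I n) → ℝ) (hσ : ∀ n, IsSingularValues (modeUnfold X n) (σ n))
    (rt : Fin N → ℕ)
    (ε' : ℝ) (hε0 : 0 ≤ ε')
    (r : Fin N → ℕ)
    (happrox : (1 - ε') * packObj σ rt ≤ packObj σ r) :
    surrLoss σ r ≤ surrLoss σ rt + ε' * (N * frobSq X - surrLoss σ rt) ∧
      surrLoss σ rt + ε' * (N * frobSq X - surrLoss σ rt) ≤
        surrLoss σ rt + ε' * N * frobSq X := by
  have h_r := surrLoss_add_packObj_of_isSingularValues hσ r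
  have h_rt := surrLoss_add_packObj_of_isSingularValues hσ rt
  constructor
  · linear_combination h_r - h_rt + happrox + ε' * h_rt
  · linarith [mul_nonneg hε0 (surrLoss_nonneg σ rt)]

/-- **Surrogate-loss guarantee for approximate packing**: if `r ∈ F` is a
`(1 − ε')`-approximation (relative to the surrogate minimizer `r̃*`) of the packing
objective, then
`L̃(X,r) ≤ L̃(X,r̃*) + ε'(N‖X‖_F² − L̃(X,r̃*)) ≤ L̃(X,r̃*) + ε'·N·‖X‖_F²`. -/
theorem surrogate_of_approximate_packing {N : ℕ} {I : Fin N → ℕ} (hI : ∀ n, 1 ≤ I n)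
    (X : (∀ k, Fin (I k)) → ℝ) (hX : X ≠ 0)
    (σ : ∀ n, Fin (I n) → ℝ) (hσ : ∀ n, IsSingularValues (modeUnfold X n) (σ n))
    (c : ℕ) (hc : 1 + ∑ n, I n ≤ c)
    (F : Set (Fin N → ℕ))
    (hF : F = {R | (∀ n, 1 ≤ R n ∧ R n ≤ I n) ∧
      (∏ n, R n) + ∑ n, I n * R n ≤ c})
    (rt : Fin N → ℕ) (hrt : rt ∈ F)
    (hrtmin : ∀ R ∈ F, surrLoss σ rt ≤ surrLoss σ R)
    (ε' : ℝ) (hε0 : 0 ≤ ε') (hε1 : ε' ≤ 1)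
    (r : Fin N → ℕ) (hr : r ∈ F)
    (happrox : (1 - ε') * packObj σ rt ≤ packObj σ r) :
    surrLoss σ r ≤ surrLoss σ rt + ε' * (N * frobSq X - surrLoss σ rt) ∧
      surrLoss σ rt + ε' * (N * frobSq X - surrLoss σ rt) ≤
        surrLoss σ rt + ε' * N * frobSq X :=
  surrogate_of_approximate_packing_general X σ hσ rt ε' hε0 r happrox
end
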